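/- Let I, K ⊆ Π with I orthogonal to K \ I. Then −(Φ \ Γ(I,K)) = Γ(K\I, I), i.e. {−α | α ∈ Φ \ (Φ_I ∪ (Φ⁺ \ Φ_K))} = Φ_{K\I} ∪ (Φ⁺ \ Φ_I). -/

import Mathlib

variable {V : Type*} [NormedAddCommGroup V] [InnerProductSpace ℝ V]

/-- `Φ` is a finite reduced crystallographic root system spanning `V`. -/
structure IsRootSystem (Φ : Set V) : Prop where
  finite : Φ.Finite
  zero_not_mem : (0 : V) ∉ Φ
  span_top : Submodule.span ℝ Φ = ⊤
  reduced : ∀ α ∈ Φ, ∀ c : ℝ, c • α ∈ Φ → c = 1 ∨ c = -1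
  crystallographic : ∀ α ∈ Φ, ∀ β ∈ Φ,
    ∃ n : ℤ, 2 * (inner ℝ β α : ℝ) / (inner ℝ α α : ℝ) = (n : ℝ)
  reflect_mem : ∀ α ∈ Φ, ∀ β ∈ Φ,
    β - (2 * (inner ℝ β α : ℝ) / (inner ℝ α α : ℝ)) • α ∈ Φ

/-- `α` is a nonnegative linear combination of elements of `Δ`. -/
def IsNonnegComb (Δ : Set V) (α : V) : Prop :=
  ∃ c : V →₀ ℝ, (c.support : Set V) ⊆ Δ ∧ (∀ v, 0 ≤ c v) ∧ α = c.sum fun v r => r • v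

/-- `Δ` is a base (set of simple roots) of the root system `Φ`. -/
structure IsBase (Φ Δ : Set V) : Prop where
  subset : Δ ⊆ Φ
  indep : LinearIndependent ℝ (Subtype.val : Δ → V)
  pos_or_neg : ∀ α ∈ Φ, IsNonnegComb Δ α ∨ IsNonnegComb Δ (-α)

/-- The set of positive roots with respect to the base `Δ`. -/
def posRoots (Φ Δ : Set V) : Set V := {α ∈ Φ | IsNonnegComb Δ α}

/-- The set of negative roots with respect to the base `Δ`. -/
def negRoots (Φ Δ : Set V) : Set V := {α ∈ Φ | IsNonnegComb Δ (-α)}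

/-- `Φ_A := Φ ∩ span A`. -/
def rootsIn (Φ A : Set V) : Set V := Φ ∩ (Submodule.span ℝ A : Set V)

/-- `Φ_A⁺`. -/
def posRootsIn (Φ Δ A : Set V) : Set V := rootsIn Φ A ∩ posRoots Φ Δ

/-- `Φ_A⁻`. -/
def negRootsIn (Φ Δ A : Set V) : Set V := rootsIn Φ A ∩ negRoots Φ Δ

/-- `Γ` is a closed subset of `Φ`. -/
def IsClosedSubset (Φ Γ : Set V) : Prop := ∀ α ∈ Γ, ∀ β ∈ Γ, α + β ∈ Φ → α + β ∈ Γ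

/-- `X` and `Y` are orthogonal sets of vectors. -/
def OrthogonalSets (X Y : Set V) : Prop := ∀ α ∈ X, ∀ β ∈ Y, (inner ℝ α β : ℝ) = 0


/-!
A root of `Φ_{A ∪ B}` with `A, B ⊆ Π` orthogonal lies in `Φ_A` or in `Φ_B`: a positive root of
minimal height violating this pairs positively with some `δ ∈ A ∪ B`, and the simple reflection
`s_δ` turns it into a positive counterexample of smaller height. Applied to `K = (K ∩ I) ∪ (K \ I)`,
this gives `Φ_K = Φ_{K ∩ I} ∪ Φ_{K \ I}`, while orthogonality makes `Φ_I` and `Φ_{K \ I}` disjoint;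
the identity then follows by sorting `α` according to its sign.
-/

open Submodule
open scoped Pointwise

lemma IsNonnegComb.mem_span {Δ : Set V} {α : V} (h : IsNonnegComb Δ α) :
    α ∈ span ℝ Δ := by
  obtain ⟨c, hc, -, rfl⟩ := h
  exact sum_mem fun v hv => smul_mem _ _ (subset_span (hc hv))

lemma isNonnegComb_of_mem {Δ : Set V} {δ : V} (hδ : δ ∈ Δ) : IsNonnegComb Δ δ := by
  classical
  refine ⟨Finsupp.single δ 1, ?_, fun v => ?_, by simp⟩
  · rw [Finsupp.support_single _ one_ne_zero, Finset.coe_singleton]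
    exact Set.singleton_subset_iff.2 hδ
  · rw [Finsupp.single_apply]
    split_ifs <;> norm_num

lemma IsNonnegComb.repr_nonneg {ι : Type*} (b : Module.Basis ι ℝ V) {Δ : Set V}
    (hΔ : Δ ⊆ Set.range b) {α : V} (h : IsNonnegComb Δ α) (i : ι) : 0 ≤ b.repr α i := by
  classical
  obtain ⟨c, hc, hnn, rfl⟩ := h
  rw [Finsupp.sum, map_sum, Finsupp.finsetSum_apply]
  refine Finset.sum_nonneg fun v hv => ?_
  obtain ⟨j, rfl⟩ := hΔ (hc hv)
  rw [map_smul, b.repr_self, Finsupp.smul_apply, smul_eq_mul, Finsupp.single_apply]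
  split_ifs <;> simp [hnn]

lemma OrthogonalSets.symm {X Y : Set V} (h : OrthogonalSets X Y) : OrthogonalSets Y X :=
  fun α hα β hβ => by rw [real_inner_comm]; exact h β hβ α hα

lemma OrthogonalSets.inner_eq_zero {X Y : Set V} (h : OrthogonalSets X Y) {v w : V}
    (hv : v ∈ span ℝ X) (hw : w ∈ span ℝ Y) : (inner ℝ v w : ℝ) = 0 :=
  (isOrtho_span.2 fun _ hα _ hβ => h _ hα _ hβ).inner_eq hv hw

lemma rootsIn_mono {Φ A B : Set V} (h : A ⊆ B) : rootsIn Φ A ⊆ rootsIn Φ B :=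
  Set.inter_subset_inter_right _ (SetLike.coe_subset_coe.2 (span_mono h))

namespace IsRootSystem

variable {Φ : Set V}

lemma ne_zero (hΦ : IsRootSystem Φ) {α : V} (hα : α ∈ Φ) : α ≠ 0 :=
  fun h => hΦ.zero_not_mem (h ▸ hα)

lemma inner_self_pos (hΦ : IsRootSystem Φ) {α : V} (hα : α ∈ Φ) : 0 < (inner ℝ α α : ℝ) :=
  real_inner_self_pos.2 (hΦ.ne_zero hα)

lemma neg_mem (hΦ : IsRootSystem Φ) {α : V} (hα : α ∈ Φ) : -α ∈ Φ := by
  have h := hΦ.reflect_mem α hα α hα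
  rwa [mul_div_assoc, div_self (hΦ.inner_self_pos hα).ne', mul_one, two_smul,
    sub_add_cancel_left] at h

lemma neg_mem_rootsIn_iff (hΦ : IsRootSystem Φ) {A : Set V} {α : V} :
    -α ∈ rootsIn Φ A ↔ α ∈ rootsIn Φ A :=
  ⟨fun h => ⟨neg_neg α ▸ hΦ.neg_mem h.1, neg_mem_iff.1 h.2⟩,
    fun h => ⟨hΦ.neg_mem h.1, Submodule.neg_mem _ h.2⟩⟩

lemma disjoint_rootsIn (hΦ : IsRootSystem Φ) {X Y : Set V} (h : OrthogonalSets X Y) :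
    Disjoint (rootsIn Φ X) (rootsIn Φ Y) :=
  Set.disjoint_left.2 fun _ hX hY => (hΦ.inner_self_pos hX.1).ne' (h.inner_eq_zero hX.2 hY.2)

end IsRootSystem

namespace IsBase

variable {Φ Δ : Set V}

lemma span_eq_top (hΔ : IsBase Φ Δ) (hΦ : IsRootSystem Φ) : span ℝ Δ = ⊤ := by
  rw [← top_le_iff, ← hΦ.span_top, span_le]
  intro α hα
  rcases hΔ.pos_or_neg α hα with h | h
  · exact h.mem_span
  · exact neg_mem_iff.1 h.mem_span

noncomputable def basis (hΔ : IsBase Φ Δ) (hΦ : IsRootSystem Φ) : Module.Basis Δ ℝ V :=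
  .mk hΔ.indep (by rw [Subtype.range_coe, hΔ.span_eq_top hΦ])

@[simp]
lemma coe_basis (hΔ : IsBase Φ Δ) (hΦ : IsRootSystem Φ) : ⇑(hΔ.basis hΦ) = Subtype.val :=
  Module.Basis.coe_mk _ _

lemma repr_nonneg (hΔ : IsBase Φ Δ) (hΦ : IsRootSystem Φ) {α : V} (h : IsNonnegComb Δ α)
    (i : Δ) : 0 ≤ (hΔ.basis hΦ).repr α i :=
  h.repr_nonneg _ (by simp) i

lemma not_isNonnegComb_neg (hΔ : IsBase Φ Δ) (hΦ : IsRootSystem Φ) {α : V} (hα : α ∈ Φ)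
    (h : IsNonnegComb Δ α) : ¬IsNonnegComb Δ (-α) := by
  intro hneg
  have hrepr : (hΔ.basis hΦ).repr α = 0 := by
    ext i
    have := hΔ.repr_nonneg hΦ hneg i
    rw [map_neg, Finsupp.neg_apply, neg_nonneg] at this
    exact this.antisymm (hΔ.repr_nonneg hΦ h i)
  exact hΦ.ne_zero hα ((hΔ.basis hΦ).repr.map_eq_zero_iff.1 hrepr)

lemma mem_span_iff (hΔ : IsBase Φ Δ) (hΦ : IsRootSystem Φ) {A : Set V} (hA : A ⊆ Δ) {α : V} :
    α ∈ span ℝ A ↔ ∀ i : Δ, (hΔ.basis hΦ).repr α i ≠ 0 → (i : V) ∈ A := by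
  have hA' : A = hΔ.basis hΦ '' (Subtype.val ⁻¹' A) := by
    rw [coe_basis, Subtype.image_preimage_coe, Set.inter_eq_right.2 hA]
  conv_lhs => rw [hA', Module.Basis.mem_span_image]
  simp [Set.subset_def]

lemma exists_inner_pos (hΔ : IsBase Φ Δ) (hΦ : IsRootSystem Φ) {A : Set V} (hA : A ⊆ Δ)
    {α : V} (hα : α ∈ Φ) (hpos : IsNonnegComb Δ α) (hspan : α ∈ span ℝ A) :
    ∃ δ ∈ A, 0 < (inner ℝ α δ : ℝ) := by
  by_contra! hle
  have : (inner ℝ α α : ℝ) ≤ 0 := by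
    nth_rw 2 [← (hΔ.basis hΦ).linearCombination_repr α]
    rw [Finsupp.linearCombination_apply, Finsupp.inner_sum, Finsupp.sum]
    refine Finset.sum_nonpos fun i hi => ?_
    rw [real_inner_smul_right, coe_basis]
    exact mul_nonpos_of_nonneg_of_nonpos (hΔ.repr_nonneg hΦ hpos i)
      (hle i ((hΔ.mem_span_iff hΦ hA).1 hspan i (Finsupp.mem_support_iff.1 hi)))
  exact this.not_gt (hΦ.inner_self_pos hα)

/-- A simple reflection `s_δ` maps the positive roots other than `δ` to positive roots. -/
lemma isNonnegComb_reflection (hΔ : IsBase Φ Δ) (hΦ : IsRootSystem Φ) {α δ : V} (hα : α ∈ Φ)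
    (hpos : IsNonnegComb Δ α) (hδ : δ ∈ Δ) (hne : α ≠ δ) :
    IsNonnegComb Δ (α - (2 * (inner ℝ α δ : ℝ) / (inner ℝ δ δ : ℝ)) • δ) := by
  refine (hΔ.pos_or_neg _ (hΦ.reflect_mem δ (hΔ.subset hδ) α hα)).resolve_right fun hneg => ?_
  -- If `s_δ α` were negative, `α` would have no nonzero coordinate off `δ`.
  have hsupp : ∀ i : Δ, (hΔ.basis hΦ).repr α i ≠ 0 → (i : V) ∈ ({δ} : Set V) := by
    intro i hi
    by_contra hiδ
    have hδb : δ = hΔ.basis hΦ ⟨δ, hδ⟩ := by simp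
    have hi' : (⟨δ, hδ⟩ : Δ) ≠ i := fun h => hiδ (h ▸ rfl)
    have hδi : (hΔ.basis hΦ).repr δ i = 0 := by
      rw [hδb, Module.Basis.repr_self, Finsupp.single_eq_of_ne' hi']
    have := hΔ.repr_nonneg hΦ hneg i
    simp only [map_neg, map_sub, map_smul, Finsupp.neg_apply, Finsupp.sub_apply,
      Finsupp.smul_apply, hδi, smul_zero, sub_zero, neg_nonneg] at this
    exact hi (this.antisymm (hΔ.repr_nonneg hΦ hpos i))
  obtain ⟨c, rfl⟩ := mem_span_singleton.1
    ((hΔ.mem_span_iff hΦ (Set.singleton_subset_iff.2 hδ)).2 hsupp)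
  rcases hΦ.reduced δ (hΔ.subset hδ) c hα with rfl | rfl
  · exact hne (one_smul _ _)
  · exact hΔ.not_isNonnegComb_neg hΦ hα hpos (by simpa using isNonnegComb_of_mem hδ)

/-- The height of a vector: the sum of its coordinates in the base `Δ`. -/
noncomputable def height (hΔ : IsBase Φ Δ) (hΦ : IsRootSystem Φ) : V →ₗ[ℝ] ℝ :=
  (hΔ.basis hΦ).constr ℝ fun _ => 1

lemma height_of_mem (hΔ : IsBase Φ Δ) (hΦ : IsRootSystem Φ) {δ : V} (hδ : δ ∈ Δ) :
    hΔ.height hΦ δ = 1 := by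
  simpa [height] using (hΔ.basis hΦ).constr_basis ℝ (fun _ => (1 : ℝ)) ⟨δ, hδ⟩

lemma exists_height_lt (hΔ : IsBase Φ Δ) (hΦ : IsRootSystem Φ) {A B : Set V} (hA : A ⊆ Δ)
    (hB : B ⊆ Δ) (hAB : OrthogonalSets A B) {γ : V} (hγ : γ ∈ posRoots Φ Δ)
    (hγAB : γ ∈ span ℝ (A ∪ B) ∧ γ ∉ span ℝ A ∧ γ ∉ span ℝ B) :
    ∃ β ∈ posRoots Φ Δ, (β ∈ span ℝ (A ∪ B) ∧ β ∉ span ℝ A ∧ β ∉ span ℝ B) ∧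
      hΔ.height hΦ β < hΔ.height hΦ γ := by
  obtain ⟨hγΦ, hγpos⟩ := hγ
  obtain ⟨hγspan, hγA, hγB⟩ := hγAB
  obtain ⟨δ, hδ, hγδ⟩ := hΔ.exists_inner_pos hΦ (Set.union_subset hA hB) hγΦ hγpos hγspan
  have hδΔ : δ ∈ Δ := Set.union_subset hA hB hδ
  have hδδ := hΦ.inner_self_pos (hΔ.subset hδΔ)
  have hne : γ ≠ δ := by
    rintro rfl
    rcases hδ with h | h
    exacts [hγA (subset_span h), hγB (subset_span h)]
  set n : ℝ := 2 * (inner ℝ γ δ : ℝ) / (inner ℝ δ δ : ℝ) with hn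
  have hn_pos : 0 < n := div_pos (by linarith) hδδ
  have hβδ : (inner ℝ (γ - n • δ) δ : ℝ) < 0 := by
    rw [inner_sub_left, real_inner_smul_left, hn, div_mul_cancel₀ _ hδδ.ne']
    linarith
  -- `s_δ γ` pairs nontrivially with `δ`, so it avoids the span of the side orthogonal to `δ`.
  have hleave : ∀ X : Set V, γ ∉ span ℝ X →
      (δ ∈ X ∨ ∀ v ∈ span ℝ X, (inner ℝ v δ : ℝ) = 0) → γ - n • δ ∉ span ℝ X := by
    rintro X hγX (hδX | hX) hβX
    · exact hγX (by simpa using add_mem hβX (smul_mem _ n (subset_span hδX)))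
    · exact hβδ.ne (hX _ hβX)
  refine ⟨γ - n • δ, ⟨hΦ.reflect_mem δ (hΔ.subset hδΔ) γ hγΦ,
    hΔ.isNonnegComb_reflection hΦ hγΦ hγpos hδΔ hne⟩,
    ⟨sub_mem hγspan (smul_mem _ n (subset_span hδ)), ?_⟩, ?_⟩
  · rcases hδ with hδA | hδB
    · exact ⟨hleave A hγA (.inl hδA), hleave B hγB
        (.inr fun v hv => hAB.symm.inner_eq_zero hv (subset_span hδA))⟩
    · exact ⟨hleave A hγA (.inr fun v hv => hAB.inner_eq_zero hv (subset_span hδB)),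
        hleave B hγB (.inl hδB)⟩
  · rw [map_sub, map_smul, hΔ.height_of_mem hΦ hδΔ, smul_eq_mul, mul_one]
    linarith

theorem rootsIn_union (hΔ : IsBase Φ Δ) (hΦ : IsRootSystem Φ) {A B : Set V} (hA : A ⊆ Δ)
    (hB : B ⊆ Δ) (hAB : OrthogonalSets A B) :
    rootsIn Φ (A ∪ B) = rootsIn Φ A ∪ rootsIn Φ B := by
  refine Set.Subset.antisymm ?_
    (Set.union_subset (rootsIn_mono Set.subset_union_left) (rootsIn_mono Set.subset_union_right))
  have hpos : ∀ γ ∈ posRoots Φ Δ, γ ∈ span ℝ (A ∪ B) → γ ∈ span ℝ A ∨ γ ∈ span ℝ B := by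
    by_contra! h
    let S : Set V :=
      {γ ∈ posRoots Φ Δ | γ ∈ span ℝ (A ∪ B) ∧ γ ∉ span ℝ A ∧ γ ∉ span ℝ B}
    obtain ⟨γ, ⟨hγ, hγS⟩, hmin⟩ :=
      S.exists_min_image (hΔ.height hΦ) (hΦ.finite.subset fun _ h => h.1.1) h
    obtain ⟨β, hβ, hβS, hlt⟩ := hΔ.exists_height_lt hΦ hA hB hAB hγ hγS
    exact (hmin β ⟨hβ, hβS⟩).not_gt hlt
  rintro α ⟨hαΦ, hαspan⟩
  rcases hΔ.pos_or_neg α hαΦ with h | h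
  · exact (hpos α ⟨hαΦ, h⟩ hαspan).imp (⟨hαΦ, ·⟩) (⟨hαΦ, ·⟩)
  · exact (hpos (-α) ⟨hΦ.neg_mem hαΦ, h⟩ (neg_mem hαspan)).imp
      (⟨hαΦ, neg_mem_iff.1 ·⟩) (⟨hαΦ, neg_mem_iff.1 ·⟩)

end IsBase

theorem statement12_general (Φ Δ : Set V) (hΦ : IsRootSystem Φ) (hΔ : IsBase Φ Δ)
    (I K : Set V) (hK : K ⊆ Δ) (horth : OrthogonalSets I (K \ I)) :
    (fun α => -α) '' (Φ \ (rootsIn Φ I ∪ (posRoots Φ Δ \ rootsIn Φ K))) =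
      rootsIn Φ (K \ I) ∪ (posRoots Φ Δ \ rootsIn Φ I) := by
  have hsplit : rootsIn Φ K = rootsIn Φ (K ∩ I) ∪ rootsIn Φ (K \ I) := by
    rw [← hΔ.rootsIn_union hΦ (Set.inter_subset_left.trans hK) (Set.sdiff_subset.trans hK)
      fun α hα β hβ => horth α hα.2 β hβ, Set.inter_union_sdiff]
  ext x
  rw [Set.image_neg_eq_neg, Set.mem_neg]
  simp only [Set.mem_sdiff, Set.mem_union, posRoots, Set.mem_ofPred_eq,
    hΦ.neg_mem_rootsIn_iff, hsplit]
  have hΦx : -x ∈ Φ ↔ x ∈ Φ := ⟨fun h => neg_neg x ▸ hΦ.neg_mem h, hΦ.neg_mem⟩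
  have hKI : x ∈ rootsIn Φ (K ∩ I) → x ∈ rootsIn Φ I :=
    (rootsIn_mono Set.inter_subset_right ·)
  have hdisj : x ∈ rootsIn Φ I → x ∉ rootsIn Φ (K \ I) :=
    fun h => Set.disjoint_left.1 (hΦ.disjoint_rootsIn horth) h
  have hKIΦ : x ∈ rootsIn Φ (K \ I) → x ∈ Φ := And.left
  have hsign : x ∈ Φ → (IsNonnegComb Δ x ↔ ¬IsNonnegComb Δ (-x)) := fun hx =>
    ⟨hΔ.not_isNonnegComb_neg hΦ hx, (hΔ.pos_or_neg x hx).resolve_right⟩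
  tauto

/-- For `I, K ⊆ Π` with `I` orthogonal to `K \ I`:
`−(Φ \ Γ(I,K)) = Γ(K\I, I)`, i.e.
`{−α ∣ α ∈ Φ \ (Φ_I ∪ (Φ⁺ \ Φ_K))} = Φ_{K\I} ∪ (Φ⁺ \ Φ_I)`. -/
theorem statement12 (Φ Δ : Set V) (hΦ : IsRootSystem Φ) (hΔ : IsBase Φ Δ)
    (I K : Set V) (hI : I ⊆ Δ) (hK : K ⊆ Δ) (horth : OrthogonalSets I (K \ I)) :
    (fun α => -α) '' (Φ \ (rootsIn Φ I ∪ (posRoots Φ Δ \ rootsIn Φ K))) =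
      rootsIn Φ (K \ I) ∪ (posRoots Φ Δ \ rootsIn Φ I) :=
  statement12_general Φ Δ hΦ hΔ I K hK horth
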